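/- In the GEW₁ model (uniform priors on all parameters), the full conditional posterior density of θ₄ is log-concave on ℝ. Precisely: for any fixed θ₁, θ₂, θ₃ ∈ ℝ and β > 0, the function ℓ : ℝ → ℝ given by ℓ(t) = −t·(Σ_{i=1}^k r_iV_i/T_i) − Σ_{i=1}^k (n_i − r_i) T_i exp(−θ₁ − θ₂/T_i − θ₃V_i − tV_i/T_i) τ_i^β − Σ_{i=1}^k Σ_{j=1}^{r_i} T_i exp(−θ₁ − θ₂/T_i − θ₃V_i − tV_i/T_i) x_{ij}^β is concave on ℝ. -/

import Mathlib

/-! The log-density is linear in θ₄ minus a nonnegative combination of exponentials of affine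
functions of θ₄; each such exponential is convex, so the whole expression is concave. -/

open Real Finset

theorem ConvexOn.finset_sum {𝕜 E β ι : Type*} [Semiring 𝕜] [PartialOrder 𝕜] [AddCommMonoid E]
    [AddCommMonoid β] [PartialOrder β] [IsOrderedAddMonoid β] [SMul 𝕜 E] [Module 𝕜 β]
    {s : Set E} (hs : Convex 𝕜 s) {t : Finset ι} {f : ι → E → β}
    (hf : ∀ i ∈ t, ConvexOn 𝕜 s (f i)) : ConvexOn 𝕜 s fun x => ∑ i ∈ t, f i x := by
  convert Finset.sum_induction f (ConvexOn 𝕜 s) (fun _ _ => ConvexOn.add) (convexOn_const 0 hs) hf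
  exact (Finset.sum_apply _ _ _).symm

theorem convexOn_mul_exp_sub_mul {a : ℝ} (ha : 0 ≤ a) (d b : ℝ) :
    ConvexOn ℝ Set.univ fun t => a * exp (d - t * b) :=
  ((convexOn_exp.comp_linearMap (LinearMap.mulRight ℝ (-b))).smul
    (mul_nonneg ha (exp_pos d).le)).congr fun t _ => by
      simp only [Function.comp_apply, LinearMap.mulRight_apply, smul_eq_mul, mul_assoc, ← exp_add,
        mul_neg, ← sub_eq_add_neg]

theorem concaveOn_neg_mul (c : ℝ) : ConcaveOn ℝ Set.univ fun t : ℝ => -t * c :=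
  ((LinearMap.mul ℝ ℝ (-c)).concaveOn convex_univ).congr fun t _ => by simp [mul_comm]

theorem gew1_theta4_logconcave_general
    (k : ℕ) (T V τ : Fin k → ℝ) (n r : Fin k → ℕ)
    (x : (i : Fin k) → Fin (r i) → ℝ)
    (hT : ∀ i, 0 < T i) (hrn : ∀ i, r i ≤ n i)
    (hτ : ∀ i, 0 < τ i) (hx : ∀ i j, 0 < x i j)
    (θ₁ θ₂ θ₃ β : ℝ) :
    ConcaveOn ℝ Set.univ (fun t : ℝ =>
      -t * (∑ i, (r i : ℝ) * V i / T i)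
      - ∑ i, ((n i : ℝ) - r i) * T i * Real.exp (-θ₁ - θ₂ / T i - θ₃ * V i - t * V i / T i) * τ i ^ β
      - ∑ i, ∑ j, T i * Real.exp (-θ₁ - θ₂ / T i - θ₃ * V i - t * V i / T i) * x i j ^ β) := by
  have hexp : ∀ i (a : ℝ), 0 ≤ a → ConvexOn ℝ Set.univ fun t : ℝ =>
      a * exp (-θ₁ - θ₂ / T i - θ₃ * V i - t * V i / T i) := fun i a ha => by
    simpa only [mul_div_assoc] using convexOn_mul_exp_sub_mul ha _ (V i / T i)
  have hcensored : ConvexOn ℝ Set.univ fun t : ℝ =>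
      ∑ i, ((n i : ℝ) - r i) * T i * exp (-θ₁ - θ₂ / T i - θ₃ * V i - t * V i / T i) * τ i ^ β :=
    ConvexOn.finset_sum convex_univ fun i _ => by
      simpa only [mul_right_comm _ (exp _)] using hexp i _ <|
        mul_nonneg (mul_nonneg (sub_nonneg.2 (by exact_mod_cast hrn i)) (hT i).le)
          (rpow_nonneg (hτ i).le β)
  have hfailed : ConvexOn ℝ Set.univ fun t : ℝ =>
      ∑ i, ∑ j, T i * exp (-θ₁ - θ₂ / T i - θ₃ * V i - t * V i / T i) * x i j ^ β :=
    ConvexOn.finset_sum convex_univ fun i _ => ConvexOn.finset_sum convex_univ fun j _ => by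
      simpa only [mul_right_comm _ (exp _)] using
        hexp i _ (mul_nonneg (hT i).le (rpow_nonneg (hx i j).le β))
  exact ((concaveOn_neg_mul _).sub hcensored).sub hfailed

theorem gew1_theta4_logconcave
    (k : ℕ) (T V τ : Fin k → ℝ) (n r : Fin k → ℕ)
    (x : (i : Fin k) → Fin (r i) → ℝ)
    (hT : ∀ i, 0 < T i) (hrn : ∀ i, r i ≤ n i)
    (hτ : ∀ i, 0 < τ i) (hx : ∀ i j, 0 < x i j)
    (θ₁ θ₂ θ₃ β : ℝ) (hβ : 0 < β) :
    ConcaveOn ℝ Set.univ (fun t : ℝ =>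
      -t * (∑ i, (r i : ℝ) * V i / T i)
      - ∑ i, ((n i : ℝ) - r i) * T i * Real.exp (-θ₁ - θ₂ / T i - θ₃ * V i - t * V i / T i) * τ i ^ β
      - ∑ i, ∑ j, T i * Real.exp (-θ₁ - θ₂ / T i - θ₃ * V i - t * V i / T i) * x i j ^ β) :=
  gew1_theta4_logconcave_general k T V τ n r x hT hrn hτ hx θ₁ θ₂ θ₃ β
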